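/- Let M = c • W with c ∈ ℂ, c ≠ 0 and W ∈ Matrix.unitaryGroup (Fin n) ℂ, and let A = U ⋆_M S ⋆_M Vᴴ be a t-SVDM of an m×p×n tensor A. Then the squared Frobenius norms of the singular tubes are nonincreasing: for all indices i with i+1 ≤ min(m,p), ∑_{j=1}^{n} |(S j) i i|² ≥ ∑_{j=1}^{n} |(S j) (i+1) (i+1)|². -/
import Mathlib


open scoped BigOperators ComplexConjugate Matrix

noncomputable section

variable {R : Type*}

/-- Mode-3 product of a third-order tensor (encoded by its frontal slices)
with a transform matrix: `(A ×₃ M) i = ∑ j, (M i j) • (A j)`. -/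
def mode3 [RCLike R] {ι α β : Type*} [Fintype ι]
    (A : ι → Matrix α β R) (M : Matrix ι ι R) : ι → Matrix α β R :=
  fun i => ∑ j, M i j • A j

/-- Frobenius (entrywise ℓ²) norm of a matrix. -/
def fnorm [RCLike R] {α β : Type*} [Fintype α] [Fintype β] (A : Matrix α β R) : ℝ :=
  Real.sqrt (∑ a, ∑ b, ‖A a b‖ ^ 2)

/-- Frobenius norm of a tensor: `‖A‖² = ∑ i, ‖A i‖²`. -/
def tnorm [RCLike R] {ι α β : Type*} [Fintype ι] [Fintype α] [Fintype β]
    (A : ι → Matrix α β R) : ℝ :=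
  Real.sqrt (∑ i, fnorm (A i) ^ 2)

/-- The ⋆_M product: facewise product in the transform domain, then inverse transform. -/
def tprodM [RCLike R] {ι m p q : Type*} [Fintype ι] [DecidableEq ι] [Fintype p]
    (M : Matrix ι ι R) (A : ι → Matrix m p R) (B : ι → Matrix p q R) :
    ι → Matrix m q R :=
  mode3 (fun i => mode3 A M i * mode3 B M i) M⁻¹

/-- Conjugate transpose of a tensor under ⋆_M. -/
def tconj [RCLike R] {ι m p : Type*} [Fintype ι] [DecidableEq ι]
    (M : Matrix ι ι R) (A : ι → Matrix m p R) : ι → Matrix p m R :=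
  mode3 (fun i => (mode3 A M i)ᴴ) M⁻¹

/-- The identity tensor under ⋆_M. -/
def tId [RCLike R] (m : Type*) [DecidableEq m] {ι : Type*} [Fintype ι] [DecidableEq ι]
    (M : Matrix ι ι R) : ι → Matrix m m R :=
  mode3 (fun _ => (1 : Matrix m m R)) M⁻¹

/-- A square tensor `Q` is ⋆_M-unitary if `Qᴴ ⋆_M Q = Q ⋆_M Qᴴ = I`. -/
def tUnitary [RCLike R] {ι m : Type*} [Fintype ι] [DecidableEq ι] [Fintype m] [DecidableEq m]
    (M : Matrix ι ι R) (Q : ι → Matrix m m R) : Prop :=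
  tprodM M (tconj M Q) Q = tId m M ∧ tprodM M Q (tconj M Q) = tId m M

/-- A t-SVDM of `A`: a factorization `A = U ⋆_M S ⋆_M Vᴴ` with `U`, `V` ⋆_M-unitary and every
transform-domain slice `Ŝ i` diagonal with real, nonnegative, nonincreasing diagonal entries. -/
def IsTSVDM [RCLike R] {m p n : ℕ} (M : Matrix (Fin n) (Fin n) R)
    (A : Fin n → Matrix (Fin m) (Fin p) R)
    (U : Fin n → Matrix (Fin m) (Fin m) R)
    (S : Fin n → Matrix (Fin m) (Fin p) R)
    (V : Fin n → Matrix (Fin p) (Fin p) R) : Prop :=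
  A = tprodM M (tprodM M U S) (tconj M V) ∧
  tUnitary M U ∧ tUnitary M V ∧
  (∀ (i : Fin n) (a : Fin m) (b : Fin p), (a : ℕ) ≠ (b : ℕ) → mode3 S M i a b = 0) ∧
  (∀ (i : Fin n) (a : Fin m) (b : Fin p), (a : ℕ) = (b : ℕ) →
      ∃ r : ℝ, 0 ≤ r ∧ mode3 S M i a b = (r : R)) ∧
  (∀ (i : Fin n) (a a' : Fin m) (b b' : Fin p), (a : ℕ) = (b : ℕ) → (a' : ℕ) = (b' : ℕ) →
      (a : ℕ) ≤ (a' : ℕ) →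
      RCLike.re (mode3 S M i a' b') ≤ RCLike.re (mode3 S M i a b))

/-- Transform-domain slice of a truncation:
(first k columns of Û) * (leading k×k block of Ŝ) * (first k columns of V̂)ᴴ. -/
def truncSlice [RCLike R] {m p : ℕ} (k : ℕ) (Uh : Matrix (Fin m) (Fin m) R)
    (Sh : Matrix (Fin m) (Fin p) R) (Vh : Matrix (Fin p) (Fin p) R) :
    Matrix (Fin m) (Fin p) R :=
  Matrix.of fun a b =>
    ∑ j : Fin m, ∑ l : Fin p,
      if (j : ℕ) < k ∧ (l : ℕ) < k then Uh a j * Sh j l * star (Vh b l) else 0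

/-- The multi-rank-ρ truncation of a t-SVDM (use `ρ = fun _ => k` for the t-rank-k truncation). -/
def truncTensor [RCLike R] {m p n : ℕ} (M : Matrix (Fin n) (Fin n) R)
    (U : Fin n → Matrix (Fin m) (Fin m) R) (S : Fin n → Matrix (Fin m) (Fin p) R)
    (V : Fin n → Matrix (Fin p) (Fin p) R) (ρ : Fin n → ℕ) :
    Fin n → Matrix (Fin m) (Fin p) R :=
  mode3 (fun i => truncSlice (ρ i) (mode3 U M i) (mode3 S M i) (mode3 V M i)) M⁻¹

/-- The permuted tensor `Aᴾ`: `(Aᴾ c) i j = (A i) c j`. -/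
def tperm [RCLike R] {m p n : ℕ} (A : Fin n → Matrix (Fin m) (Fin p) R) :
    Fin m → Matrix (Fin n) (Fin p) R :=
  fun c => Matrix.of fun i j => A i c j


lemma mode3_mode3' {ι α β : Type*} [Fintype ι] (A : ι → Matrix α β ℂ)
    (M N : Matrix ι ι ℂ) : mode3 (mode3 A M) N = mode3 A (N * M) := by
  funext i
  simp only [mode3, Matrix.mul_apply, Finset.smul_sum, Finset.sum_smul, smul_smul]
  rw [Finset.sum_comm]

lemma mode3_one' {ι α β : Type*} [Fintype ι] [DecidableEq ι] (A : ι → Matrix α β ℂ) :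
    mode3 A (1 : Matrix ι ι ℂ) = A := by
  funext i
  simp [mode3, Matrix.one_apply, ite_smul]

lemma dot_eq_norm {n : ℕ} (u : Fin n → ℂ) :
    (↑(∑ j, ‖u j‖ ^ 2) : ℂ) = dotProduct (star u) u := by
  simp [dotProduct, RCLike.conj_mul]

lemma unitary_mulVec_norm {n : ℕ} (W : Matrix (Fin n) (Fin n) ℂ)
    (hW : W ∈ Matrix.unitaryGroup (Fin n) ℂ) (v : Fin n → ℂ) :
    ∑ j, ‖(Wᴴ *ᵥ v) j‖ ^ 2 = ∑ k, ‖v k‖ ^ 2 := by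
  have h1 : W * Wᴴ = 1 := by
    simpa [Matrix.star_eq_conjTranspose] using (Matrix.mem_unitaryGroup_iff).mp hW
  have key : dotProduct (star (Wᴴ *ᵥ v)) (Wᴴ *ᵥ v) = dotProduct (star v) v := by
    rw [Matrix.star_mulVec, Matrix.conjTranspose_conjTranspose,
      Matrix.dotProduct_mulVec, Matrix.vecMul_vecMul, h1, Matrix.vecMul_one]
  have := (dot_eq_norm (Wᴴ *ᵥ v)).trans (key.trans (dot_eq_norm v).symm)
  exact_mod_cast this

/-- the squared Frobenius norms of the singular tubes of a t-SVDM
are nonincreasing. -/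
theorem stmt4 {n m p : ℕ}
    (W : Matrix (Fin n) (Fin n) ℂ) (hW : W ∈ Matrix.unitaryGroup (Fin n) ℂ)
    (c : ℂ) (hc : c ≠ 0)
    (A : Fin n → Matrix (Fin m) (Fin p) ℂ)
    (U : Fin n → Matrix (Fin m) (Fin m) ℂ)
    (S : Fin n → Matrix (Fin m) (Fin p) ℂ)
    (V : Fin n → Matrix (Fin p) (Fin p) ℂ)
    (h : IsTSVDM (c • W) A U S V)
    (i : ℕ) (hi : i + 1 < min m p) :
    ∑ j : Fin n,
        ‖S j ⟨i + 1, lt_of_lt_of_le hi (min_le_left m p)⟩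
             ⟨i + 1, lt_of_lt_of_le hi (min_le_right m p)⟩‖ ^ 2 ≤
      ∑ j : Fin n,
        ‖S j ⟨i, lt_of_lt_of_le (lt_of_le_of_lt (Nat.le_succ i) hi) (min_le_left m p)⟩
             ⟨i, lt_of_lt_of_le (lt_of_le_of_lt (Nat.le_succ i) hi) (min_le_right m p)⟩‖ ^ 2 := by
  classical
  set M : Matrix (Fin n) (Fin n) ℂ := c • W with hM
  have h1 : W * Wᴴ = 1 := by
    simpa [Matrix.star_eq_conjTranspose] using (Matrix.mem_unitaryGroup_iff).mp hW
  have h1' : Wᴴ * W = 1 := by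
    simpa [Matrix.star_eq_conjTranspose] using (Matrix.mem_unitaryGroup_iff').mp hW
  have hMinv : M⁻¹ = c⁻¹ • Wᴴ := by
    apply Matrix.inv_eq_left_inv
    rw [hM, Matrix.smul_mul, Matrix.mul_smul, smul_smul, inv_mul_cancel₀ hc, h1', one_smul]
  have hS : mode3 (mode3 S M) M⁻¹ = S := by
    rw [mode3_mode3', hMinv]
    have : (c⁻¹ • Wᴴ) * M = 1 := by
      rw [hM, Matrix.smul_mul, Matrix.mul_smul, smul_smul, inv_mul_cancel₀ hc, h1', one_smul]
    rw [this, mode3_one']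
  -- indices
  set a1 : Fin m := ⟨i, lt_of_lt_of_le (lt_of_le_of_lt (Nat.le_succ i) hi) (min_le_left m p)⟩
  set b1 : Fin p := ⟨i, lt_of_lt_of_le (lt_of_le_of_lt (Nat.le_succ i) hi) (min_le_right m p)⟩
  set a2 : Fin m := ⟨i + 1, lt_of_lt_of_le hi (min_le_left m p)⟩
  set b2 : Fin p := ⟨i + 1, lt_of_lt_of_le hi (min_le_right m p)⟩
  -- tube sums in transform domain
  have tube : ∀ (a : Fin m) (b : Fin p),
      ∑ j : Fin n, ‖S j a b‖ ^ 2 = ‖c⁻¹‖ ^ 2 * ∑ k, ‖mode3 S M k a b‖ ^ 2 := by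
    intro a b
    have hSab : ∀ j, S j a b = c⁻¹ * (Wᴴ *ᵥ (fun k => mode3 S M k a b)) j := by
      intro j
      conv_lhs => rw [← hS]
      simp [mode3, hMinv, Matrix.mulVec, dotProduct, Finset.mul_sum, mul_assoc,
        Matrix.sum_apply, Matrix.smul_apply, smul_eq_mul]
    calc ∑ j : Fin n, ‖S j a b‖ ^ 2
        = ∑ j : Fin n, ‖c⁻¹‖ ^ 2 * ‖(Wᴴ *ᵥ (fun k => mode3 S M k a b)) j‖ ^ 2 := by
          refine Finset.sum_congr rfl fun j _ => ?_
          rw [hSab j, norm_mul, mul_pow]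
      _ = ‖c⁻¹‖ ^ 2 * ∑ j, ‖(Wᴴ *ᵥ (fun k => mode3 S M k a b)) j‖ ^ 2 := by
          rw [Finset.mul_sum]
      _ = ‖c⁻¹‖ ^ 2 * ∑ k, ‖mode3 S M k a b‖ ^ 2 := by
          rw [unitary_mulVec_norm W hW]
  rw [tube a1 b1, tube a2 b2]
  apply mul_le_mul_of_nonneg_left _ (by positivity)
  apply Finset.sum_le_sum
  intro k _
  obtain ⟨r1, hr1, he1⟩ := h.2.2.2.2.1 k a1 b1 rfl
  obtain ⟨r2, hr2, he2⟩ := h.2.2.2.2.1 k a2 b2 rfl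
  have hle : r2 ≤ r1 := by
    have := h.2.2.2.2.2 k a1 a2 b1 b2 rfl rfl (Nat.le_succ i)
    rw [he1, he2] at this
    simpa using this
  rw [he1, he2]
  simp only [RCLike.norm_ofReal]
  rw [abs_of_nonneg hr2, abs_of_nonneg hr1]
  exact pow_le_pow_left₀ hr2 hle 2
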